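/- arXiv:2501.09002 — 2 statements merged into one kernel-verified Lean document; each statement's English description precedes it below -/
import Mathlib

section
/- Let $p \in (1,\infty)$ and let $f: \mathbb{R}^n \to [0,\infty)$ be a convex function with $f(u) = 0$ iff $u \in \mathbb{R}\mathbf{1}$, such that $f^{1/p}$ is a seminorm and $f$ is differentiable. Fix $u, v \in \mathbb{R}^n$ with $v \notin \mathbb{R}\mathbf{1}$, and define $g(t) := f(u; v)$ evaluated along the line, i.e. $g(t) := \tfrac1p \tfrac{d}{ds} f(u + tv + sv)|_{s=0}$. Then $g: \mathbb{R} \to \mathbb{R}$ is strictly increasing. -/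
/-- strict monotonicity of the directional derivative
`t ↦ f(u + tv; v)` whenever `v` is not constant. -/
theorem stmt_11 (p : ℝ) (hp : 1 < p) (n : ℕ)
    (f : (Fin n → ℝ) → ℝ)
    (hconv : ConvexOn ℝ Set.univ f)
    (hnn : ∀ u, 0 ≤ f u)
    (hzero : ∀ u, f u = 0 ↔ ∃ c : ℝ, u = fun _ => c)
    (hadd : ∀ u v, (f (u + v)) ^ (1/p) ≤ (f u) ^ (1/p) + (f v) ^ (1/p))
    (hhom : ∀ (c : ℝ) u, f (c • u) = |c| ^ p * f u)
    (hdiff : Differentiable ℝ f)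
    (hcl2 : 2 ≤ p → ∀ a b, 2 * (f a + f b) ≤ f (a + b) + f (a - b))
    (hcl1 : p ≤ 2 → ∀ a b,
      2 * ((f a) ^ (1/(p-1)) + (f b) ^ (1/(p-1))) ^ (p-1) ≤ f (a + b) + f (a - b))
    (u v : Fin n → ℝ) (hv : ¬ ∃ c : ℝ, v = fun _ => c) :
    StrictMono (fun t : ℝ => (1/p) * deriv (fun s : ℝ => f (u + t • v + s • v)) 0) := by
  set φ : ℝ → ℝ := fun t => f (u + t • v) with hφ
  -- differentiability of φ
  have hline : Differentiable ℝ (fun t : ℝ => u + t • v) :=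
    (differentiable_const u).add (differentiable_id.smul_const v)
  have hφdiff : Differentiable ℝ φ := hdiff.comp hline
  -- convexity of φ
  have hφconv : ConvexOn ℝ Set.univ φ := by
    have := hconv.comp_affineMap (AffineMap.lineMap u (u + v))
    have heq : (f ∘ (AffineMap.lineMap u (u + v))) = φ := by
      funext t
      simp [AffineMap.lineMap_apply, hφ, add_comm, Function.comp]
    rw [heq] at this
    simpa using this
  -- the inner function is a shift of φ
  have hshift : ∀ t : ℝ, deriv (fun s : ℝ => f (u + t • v + s • v)) 0 = deriv φ t := by
    intro t
    have : (fun s : ℝ => f (u + t • v + s • v)) = fun s => φ (t + s) := by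
      funext s
      simp only [hφ, add_smul, add_assoc]
    rw [this, deriv_comp_const_add, add_zero]
  -- strict midpoint inequality: the midpoint can't equal the average
  have hmid : ∀ x y : ℝ, x < y → 2 * φ ((x + y) / 2) ≠ φ x + φ y := by
    intro x y hxy habs
    set X : Fin n → ℝ := u + ((x + y) / 2) • v with hX
    set Y : Fin n → ℝ := ((x - y) / 2) • v with hY
    have hXY1 : X + Y = u + x • v := by
      rw [hX, hY]
      rw [add_assoc, ← add_smul]
      ring_nf
    have hXY2 : X - Y = u + y • v := by
      rw [hX, hY]
      rw [add_sub_assoc, ← sub_smul]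
      ring_nf
    -- f Y = 0
    have hfY : f Y = 0 := by
      rcases le_total 2 p with h2p | hp2
      · have := hcl2 h2p X Y
        rw [hXY1, hXY2] at this
        have h2 : 2 * (f X + f Y) ≤ 2 * f X := by
          calc 2 * (f X + f Y) ≤ f (u + x • v) + f (u + y • v) := this
          _ = 2 * f X := by rw [← habs]
        nlinarith [hnn Y]
      · have := hcl1 hp2 X Y
        rw [hXY1, hXY2] at this
        have hpm : (0:ℝ) < p - 1 := by linarith
        have hq : (0:ℝ) < 1 / (p - 1) := by positivity
        have h2 : ((f X) ^ (1/(p-1)) + (f Y) ^ (1/(p-1))) ^ (p-1) ≤ f X := by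
          have : 2 * ((f X) ^ (1/(p-1)) + (f Y) ^ (1/(p-1))) ^ (p-1) ≤ 2 * f X := by
            calc 2 * ((f X) ^ (1/(p-1)) + (f Y) ^ (1/(p-1))) ^ (p-1)
                ≤ f (u + x • v) + f (u + y • v) := this
            _ = 2 * f X := by rw [← habs]
          linarith
        have hfx : ((f X) ^ (1/(p-1))) ^ (p-1) = f X := by
          rw [← Real.rpow_mul (hnn X), one_div, inv_mul_cancel₀ (ne_of_gt hpm),
            Real.rpow_one]
        nth_rewrite 2 [← hfx] at h2
        have hle : (f X) ^ (1/(p-1)) + (f Y) ^ (1/(p-1)) ≤ (f X) ^ (1/(p-1)) :=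
          (Real.rpow_le_rpow_iff
            (add_nonneg (Real.rpow_nonneg (hnn X) _) (Real.rpow_nonneg (hnn Y) _))
            (Real.rpow_nonneg (hnn X) _) hpm).mp h2
        have hY0 : (f Y) ^ (1/(p-1)) ≤ 0 := by linarith
        have hY0' : (f Y) ^ (1/(p-1)) = 0 :=
          le_antisymm hY0 (Real.rpow_nonneg (hnn Y) _)
        exact (Real.rpow_eq_zero (hnn Y) (ne_of_gt hq)).mp hY0'
    -- so Y is constant, hence v is constant — contradiction
    obtain ⟨c, hc⟩ := (hzero Y).mp hfY
    apply hv
    refine ⟨c * (2 / (x - y)), funext fun i => ?_⟩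
    have hi := congrFun hc i
    simp only [hY, Pi.smul_apply, smul_eq_mul] at hi
    have hxyne : x - y ≠ 0 := by intro h; linarith [sub_eq_zero.mp h]
    field_simp at hi ⊢
    linarith [hi]
  -- strict monotonicity of deriv φ
  have hderiv : StrictMono (deriv φ) := by
    intro x y hxy
    set m : ℝ := (x + y) / 2 with hm
    have hxm : x < m := by rw [hm]; linarith
    have hmy : m < y := by rw [hm]; linarith
    have h1 : deriv φ x ≤ slope φ x m :=
      hφconv.deriv_le_slope trivial trivial hxm (hφdiff x)
    have h2 : slope φ x m ≤ deriv φ m :=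
      hφconv.slope_le_deriv trivial trivial hxm (hφdiff m)
    have h3 : deriv φ m ≤ slope φ m y :=
      hφconv.deriv_le_slope trivial trivial hmy (hφdiff m)
    have h4 : slope φ m y ≤ deriv φ y :=
      hφconv.slope_le_deriv trivial trivial hmy (hφdiff y)
    rcases lt_or_ge (deriv φ x) (deriv φ y) with h | h
    · exact h
    -- all equal
    have e1 : slope φ x m = slope φ m y := le_antisymm (h2.trans h3) (by linarith)
    rw [slope_def_field, slope_def_field] at e1
    have hmx : m - x = (y - x) / 2 := by rw [hm]; ring
    have hym : y - m = (y - x) / 2 := by rw [hm]; ring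
    rw [hmx, hym] at e1
    have hpos : (y - x) / 2 ≠ 0 := by
      have : 0 < y - x := by linarith
      positivity
    have : φ m - φ x = φ y - φ m := by
      field_simp [sub_ne_zero.mpr hxy.ne'] at e1
      linarith [e1]
    exact absurd (by linarith : 2 * φ ((x+y)/2) = φ x + φ y) (hmid x y hxy)
  -- conclude
  intro x y hxy
  simp only [hshift]
  have hppos : (0:ℝ) < 1 / p := by positivity
  exact (mul_lt_mul_iff_right₀ hppos).mpr (hderiv hxy)
end

section
/- Let $(\Omega, \mathscr{F}, \mathbb{P})$ be a probability space, let $(\mathscr{F}_n)_{n \ge 0}$ be a filtration generating $\mathscr{F}$, and let $\widetilde{\mathbb{P}}$ be a probability measure on $(\Omega,\mathscr{F})$ with $\widetilde{\mathbb{P}}|_{\mathscr{F}_n} \ll \mathbb{P}|_{\mathscr{F}_n}$ for all $n$. Define $\alpha_n$ as the ratio of consecutive Radon–Nikodym derivatives: $\alpha_n = \frac{d(\widetilde{\mathbb{P}}|_{\mathscr{F}_n})/d(\mathbb{P}|_{\mathscr{F}_n})}{d(\widetilde{\mathbb{P}}|_{\mathscr{F}_{n-1}})/d(\mathbb{P}|_{\mathscr{F}_{n-1}})}$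 on the set where the denominator is positive, and $0$ elsewhere. If $\sum_{n \ge 1}(1 - \mathbb{E}[\sqrt{\alpha_n} \mid \mathscr{F}_{n-1}]) = \infty$ $\mathbb{P}$-almost surely, then $\widetilde{\mathbb{P}} \perp \mathbb{P}$. -/
/-!
With `Dₙ = d(Q|ℱₙ)/d(P|ℱₙ)`, the process `Xₙ = √Dₙ` satisfies `E[Xₙ₊₁ | ℱₙ] = Xₙ βₙ` with
`βₙ = E[√αₙ₊₁ | ℱₙ] ≥ 0`. Since `b e^{1-b} ≤ 1`, the compensated process
`exp (∑_{k<n} (1 - β_k)) Xₙ` is a nonnegative supermartingale, hence converges `P`-a.s.; as the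
compensator diverges, `Xₙ → 0` and so `Dₙ → 0` `P`-a.s. On the other hand
`E[dQ/dP | ℱₙ] ≤ Dₙ`, and by Lévy's upward theorem the left side tends to `dQ/dP`, which is
therefore `0` `P`-a.s., i.e. `Q ⟂ P`.
-/

open MeasureTheory Filter Topology

lemma mul_exp_one_sub_le_one (b : ℝ) : b * Real.exp (1 - b) ≤ 1 :=
  calc b * Real.exp (1 - b) ≤ Real.exp (b - 1) * Real.exp (1 - b) := by
        gcongr; linarith [Real.add_one_le_exp (b - 1)]
    _ = 1 := by rw [← Real.exp_add]; simp

namespace MeasureTheory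

section Supermartingale

variable {Ω : Type*} {m0 : MeasurableSpace Ω} {ℱ : Filtration ℕ m0} {P : Measure Ω}
  [IsFiniteMeasure P]

theorem Supermartingale.exists_ae_tendsto_of_nonneg {f : ℕ → Ω → ℝ}
    (hf : Supermartingale f ℱ P) (hf0 : ∀ n, 0 ≤ᵐ[P] f n) :
    ∀ᵐ ω ∂P, ∃ c, Tendsto (fun n => f n ω) atTop (𝓝 c) := by
  have hbdd : ∀ n, eLpNorm ((-f) n) 1 P ≤ ENNReal.ofReal (∫ ω, f 0 ω ∂P) := fun n => by
    have hint : ∫ ω, f n ω ∂P ≤ ∫ ω, f 0 ω ∂P := by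
      simpa using hf.setIntegral_le (Nat.zero_le n) MeasurableSet.univ
    rw [Pi.neg_apply, eLpNorm_neg, eLpNorm_one_eq_lintegral_enorm,
      ← ofReal_integral_norm_eq_lintegral_enorm (hf.integrable n)]
    refine ENNReal.ofReal_le_ofReal (le_of_eq_of_le (integral_congr_ae ?_) hint)
    filter_upwards [hf0 n] with ω hω using Real.norm_of_nonneg hω
  filter_upwards [hf.neg.exists_ae_tendsto_of_bdd hbdd] with ω ⟨c, hc⟩
  exact ⟨-c, by simpa using hc.neg⟩

variable {X β : ℕ → Ω → ℝ}

theorem supermartingale_exp_sum_mul (hX : StronglyAdapted ℱ X) (hX0 : ∀ n, 0 ≤ᵐ[P] X n)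
    (hXint : ∀ n, Integrable (X n) P) (hβ : StronglyAdapted ℱ β) (hβ0 : ∀ n, 0 ≤ᵐ[P] β n)
    (hstep : ∀ n, P[X (n + 1) | ℱ n] ≤ᵐ[P] X n * β n) :
    Supermartingale (fun n ω => Real.exp (∑ k ∈ Finset.range n, (1 - β k ω)) * X n ω) ℱ P := by
  set E : ℕ → Ω → ℝ := fun n ω => Real.exp (∑ k ∈ Finset.range n, (1 - β k ω))
  have hE : ∀ n m, n ≤ m + 1 → StronglyMeasurable[ℱ m] (E n) := fun n m hnm =>
    Real.continuous_exp.comp_stronglyMeasurable <| Finset.stronglyMeasurable_fun_sum _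
      fun k hk => stronglyMeasurable_const.sub <|
        (hβ k).mono (ℱ.mono (by have := Finset.mem_range.mp hk; omega))
  have hE_le : ∀ n, ∀ᵐ ω ∂P, ‖E n ω‖ ≤ Real.exp n := fun n => by
    filter_upwards [ae_all_iff.mpr hβ0] with ω hω
    rw [Real.norm_of_nonneg (Real.exp_nonneg _), Real.exp_le_exp]
    calc ∑ k ∈ Finset.range n, (1 - β k ω) ≤ ∑ _k ∈ Finset.range n, (1 : ℝ) :=
          Finset.sum_le_sum fun k _ => by linarith [show (0 : ℝ) ≤ β k ω from hω k]
      _ = n := by simp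
  have hint : ∀ n m, n ≤ m + 1 → Integrable (fun ω => E n ω * X m ω) P := fun n m hnm =>
    (hXint m).bdd_mul ((hE n m hnm).mono (ℱ.le m)).aestronglyMeasurable (hE_le n)
  refine supermartingale_nat (fun n => (hE n n n.le_succ).mul (hX n))
    (fun n => hint n n n.le_succ) fun n => ?_
  have hpull : P[fun ω => E (n + 1) ω * X (n + 1) ω | ℱ n]
      =ᵐ[P] fun ω => E (n + 1) ω * P[X (n + 1) | ℱ n] ω :=
    condExp_mul_of_stronglyMeasurable_left (hE (n + 1) n le_rfl)
      (hint (n + 1) (n + 1) (n + 1).le_succ) (hXint (n + 1))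
  filter_upwards [hpull, hstep n, hX0 n] with ω hω hstepω hXω
  rw [hω]
  calc E (n + 1) ω * P[X (n + 1) | ℱ n] ω ≤ E (n + 1) ω * (X n ω * β n ω) :=
        mul_le_mul_of_nonneg_left hstepω (Real.exp_nonneg _)
    _ = E n ω * X n ω * (β n ω * Real.exp (1 - β n ω)) := by
        simp only [E, Finset.sum_range_succ, Real.exp_add]; ring
    _ ≤ E n ω * X n ω :=
        mul_le_of_le_one_right (mul_nonneg (Real.exp_nonneg _) hXω) (mul_exp_one_sub_le_one _)

theorem ae_tendsto_zero_of_condExp_succ_le_mul (hX : StronglyAdapted ℱ X)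
    (hX0 : ∀ n, 0 ≤ᵐ[P] X n) (hXint : ∀ n, Integrable (X n) P) (hβ : StronglyAdapted ℱ β)
    (hβ0 : ∀ n, 0 ≤ᵐ[P] β n) (hstep : ∀ n, P[X (n + 1) | ℱ n] ≤ᵐ[P] X n * β n)
    (hdiv : ∀ᵐ ω ∂P, Tendsto (fun N => ∑ n ∈ Finset.range N, (1 - β n ω)) atTop atTop) :
    ∀ᵐ ω ∂P, Tendsto (fun n => X n ω) atTop (𝓝 0) := by
  have hY0 : ∀ n, 0 ≤ᵐ[P] fun ω => Real.exp (∑ k ∈ Finset.range n, (1 - β k ω)) * X n ω :=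
    fun n => by filter_upwards [hX0 n] with ω hω using mul_nonneg (Real.exp_nonneg _) hω
  filter_upwards [Supermartingale.exists_ae_tendsto_of_nonneg
    (supermartingale_exp_sum_mul hX hX0 hXint hβ hβ0 hstep) hY0, hdiv] with ω ⟨c, hc⟩ hS
  have h := hc.mul (Real.tendsto_exp_atBot.comp (tendsto_neg_atTop_atBot.comp hS))
  rw [mul_zero] at h
  refine h.congr fun n => ?_
  simp only [Function.comp_apply]
  rw [mul_right_comm, ← Real.exp_add, add_neg_cancel, Real.exp_zero, one_mul]

end Supermartingale

lemma integrable_sqrt_toReal {Ω : Type*} {m0 : MeasurableSpace Ω} {μ : Measure Ω}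
    [IsFiniteMeasure μ] {f : Ω → ENNReal} (hf : AEMeasurable f μ) (hfi : ∫⁻ ω, f ω ∂μ ≠ ⊤) :
    Integrable (fun ω => √(f ω).toReal) μ := by
  refine ((integrable_const 1).add (integrable_toReal_of_lintegral_ne_top hf hfi)).mono'
    (Real.continuous_sqrt.comp_aestronglyMeasurable hf.ennreal_toReal.aestronglyMeasurable)
    (ae_of_all _ fun ω => ?_)
  have hx : 0 ≤ (f ω).toReal := ENNReal.toReal_nonneg
  rw [Real.norm_of_nonneg (Real.sqrt_nonneg _)]
  show √(f ω).toReal ≤ 1 + (f ω).toReal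
  nlinarith [Real.sq_sqrt hx, Real.sqrt_nonneg (f ω).toReal]

namespace Measure

variable {Ω : Type*} {m m0 : MeasurableSpace Ω} {μ ν : Measure Ω} [IsFiniteMeasure μ]

lemma ae_rnDeriv_trim_lt_top (hm : m ≤ m0) :
    ∀ᵐ ω ∂ν, (μ.trim hm).rnDeriv (ν.trim hm) ω < ⊤ :=
  ae_of_ae_trim hm (rnDeriv_lt_top _ _)

variable [IsFiniteMeasure ν]

lemma lintegral_rnDeriv_trim_mul (hm : m ≤ m0) (hμν : μ.trim hm ≪ ν.trim hm)
    {f : Ω → ENNReal} (hf : Measurable[m] f) :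
    ∫⁻ ω, (μ.trim hm).rnDeriv (ν.trim hm) ω * f ω ∂ν = ∫⁻ ω, f ω ∂μ := by
  rw [← lintegral_trim hm (f := fun ω => (μ.trim hm).rnDeriv (ν.trim hm) ω * f ω)
      ((measurable_rnDeriv _ _).mul hf), ← lintegral_trim hm hf]
  exact lintegral_rnDeriv_mul hμν hf.aemeasurable

lemma setLIntegral_rnDeriv_trim (hm : m ≤ m0) (hμν : μ.trim hm ≪ ν.trim hm)
    {s : Set Ω} (hs : MeasurableSet[m] s) :
    ∫⁻ ω in s, (μ.trim hm).rnDeriv (ν.trim hm) ω ∂ν = μ s := by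
  rw [← lintegral_indicator (hm s hs),
    ← lintegral_trim hm ((measurable_rnDeriv (μ.trim hm) (ν.trim hm)).indicator hs),
    lintegral_indicator hs, setLIntegral_rnDeriv' hμν hs, trim_measurableSet_eq hm hs]

lemma lintegral_rnDeriv_trim (hm : m ≤ m0) (hμν : μ.trim hm ≪ ν.trim hm) :
    ∫⁻ ω, (μ.trim hm).rnDeriv (ν.trim hm) ω ∂ν = μ Set.univ := by
  have h := setLIntegral_rnDeriv_trim hm hμν MeasurableSet.univ
  rwa [restrict_univ] at h

lemma integrable_toReal_rnDeriv_trim (hm : m ≤ m0) (hμν : μ.trim hm ≪ ν.trim hm) :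
    Integrable (fun ω => ((μ.trim hm).rnDeriv (ν.trim hm) ω).toReal) ν :=
  integrable_toReal_of_lintegral_ne_top ((measurable_rnDeriv _ _).mono hm le_rfl).aemeasurable
    ((lintegral_rnDeriv_trim hm hμν).trans_ne (measure_ne_top μ Set.univ))

/-- Not an equality in general: the part of `μ` singular to `ν` can become absolutely continuous
once restricted to `m`. -/
lemma condExp_toReal_rnDeriv_le_toReal_rnDeriv_trim (hm : m ≤ m0)
    (hμν : μ.trim hm ≪ ν.trim hm) :
    ν[fun ω => (μ.rnDeriv ν ω).toReal | m]
      ≤ᵐ[ν] fun ω => ((μ.trim hm).rnDeriv (ν.trim hm) ω).toReal := by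
  have hsm : StronglyMeasurable[m] fun ω => ((μ.trim hm).rnDeriv (ν.trim hm) ω).toReal :=
    (measurable_rnDeriv _ _).ennreal_toReal.stronglyMeasurable
  refine ae_of_ae_trim hm <| ae_le_of_forall_setIntegral_le
    (integrable_condExp.trim hm stronglyMeasurable_condExp)
    ((integrable_toReal_rnDeriv_trim hm hμν).trim hm hsm) fun s hs _ => ?_
  rw [← setIntegral_trim hm stronglyMeasurable_condExp hs, ← setIntegral_trim hm hsm hs,
    setIntegral_condExp hm integrable_toReal_rnDeriv hs,
    integral_toReal (measurable_rnDeriv _ _).aemeasurable.restrict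
      (ae_restrict_of_ae (rnDeriv_lt_top _ _)),
    integral_toReal ((measurable_rnDeriv _ _).mono hm le_rfl).aemeasurable.restrict
      (ae_restrict_of_ae (ae_rnDeriv_trim_lt_top hm)),
    setLIntegral_rnDeriv_trim hm hμν hs]
  exact ENNReal.toReal_mono (measure_ne_top μ s) (setLIntegral_rnDeriv_le s)

end Measure

namespace Filtration

variable {Ω : Type*} {m0 : MeasurableSpace Ω}

noncomputable def densityProcess (ℱ : Filtration ℕ m0) (μ ν : Measure Ω) (n : ℕ) :
    Ω → ENNReal :=
  (μ.trim (ℱ.le n)).rnDeriv (ν.trim (ℱ.le n))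

/-- `Dₙ₊₁ / Dₙ`, set to `0` where `Dₙ = 0`: this is the paper's `αₙ₊₁`. -/
noncomputable def densityRatio (ℱ : Filtration ℕ m0) (μ ν : Measure Ω) (n : ℕ) :
    Ω → ENNReal := fun ω =>
  if ℱ.densityProcess μ ν n ω = 0 then 0
  else ℱ.densityProcess μ ν (n + 1) ω / ℱ.densityProcess μ ν n ω

variable {ℱ : Filtration ℕ m0} {μ ν : Measure Ω}

lemma measurable_densityProcess (n : ℕ) : Measurable[ℱ n] (ℱ.densityProcess μ ν n) :=
  Measure.measurable_rnDeriv _ _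

lemma measurable_densityRatio (n : ℕ) : Measurable[ℱ (n + 1)] (ℱ.densityRatio μ ν n) := by
  have hD : Measurable[ℱ (n + 1)] (ℱ.densityProcess μ ν n) :=
    (measurable_densityProcess n).mono (ℱ.mono n.le_succ) le_rfl
  exact Measurable.ite (hD (measurableSet_singleton 0)) measurable_const
    ((measurable_densityProcess (n + 1)).div hD)

lemma stronglyAdapted_sqrt_densityProcess :
    StronglyAdapted ℱ fun n ω => √(ℱ.densityProcess μ ν n ω).toReal := fun n =>
  Real.continuous_sqrt.comp_stronglyMeasurable
    (measurable_densityProcess n).ennreal_toReal.stronglyMeasurable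

variable [IsFiniteMeasure μ] [IsFiniteMeasure ν]

lemma ae_densityProcess_eq_zero_of_le (habs : ∀ n, μ.trim (ℱ.le n) ≪ ν.trim (ℱ.le n))
    {n k : ℕ} (hnk : n ≤ k) :
    ∀ᵐ ω ∂ν, ℱ.densityProcess μ ν n ω = 0 → ℱ.densityProcess μ ν k ω = 0 := by
  set A := {ω | ℱ.densityProcess μ ν n ω = 0}
  have hA : MeasurableSet[ℱ n] A := measurable_densityProcess n (measurableSet_singleton 0)
  have hzero : ∫⁻ ω in A, ℱ.densityProcess μ ν k ω ∂ν = 0 := by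
    rw [densityProcess, Measure.setLIntegral_rnDeriv_trim _ (habs k) (ℱ.mono hnk _ hA),
      ← Measure.setLIntegral_rnDeriv_trim _ (habs n) hA]
    exact setLIntegral_eq_zero (ℱ.le n _ hA) fun ω hω => hω
  rw [lintegral_eq_zero_iff ((measurable_densityProcess k).mono (ℱ.le k) le_rfl),
    EventuallyEq, ae_restrict_iff' (ℱ.le n _ hA)] at hzero
  exact hzero

lemma densityProcess_succ_ae_eq_mul (habs : ∀ n, μ.trim (ℱ.le n) ≪ ν.trim (ℱ.le n)) (n : ℕ) :
    ℱ.densityProcess μ ν (n + 1) =ᵐ[ν] ℱ.densityRatio μ ν n * ℱ.densityProcess μ ν n := by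
  filter_upwards [ae_densityProcess_eq_zero_of_le habs n.le_succ,
    Measure.ae_rnDeriv_trim_lt_top (μ := μ) (ℱ.le n)] with ω hzero hlt
  by_cases h : ℱ.densityProcess μ ν n ω = 0
  · simp [densityRatio, h, hzero h]
  · simp only [densityRatio, Pi.mul_apply, if_neg h]
    exact (ENNReal.div_mul_cancel h hlt.ne).symm

lemma lintegral_densityRatio_le (habs : ∀ n, μ.trim (ℱ.le n) ≪ ν.trim (ℱ.le n)) (n : ℕ) :
    ∫⁻ ω, ℱ.densityRatio μ ν n ω ∂ν ≤ ν Set.univ := by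
  set D := ℱ.densityProcess μ ν
  set h : Ω → ENNReal := fun ω => if D n ω = 0 then 0 else (D n ω)⁻¹
  have hh : Measurable[ℱ n] h := Measurable.ite (measurable_densityProcess n
    (measurableSet_singleton 0)) measurable_const (measurable_densityProcess n).inv
  have hratio : ℱ.densityRatio μ ν n = fun ω => D (n + 1) ω * h ω := funext fun ω => by
    by_cases hc : D n ω = 0
    · simp [densityRatio, h, D, hc]
    · simp [densityRatio, h, D, hc, div_eq_mul_inv]
  -- `h` is `ℱ n`-measurable, so integrating it against `μ` can be done with `Dₙ₊₁` or with `Dₙ`.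
  calc ∫⁻ ω, ℱ.densityRatio μ ν n ω ∂ν = ∫⁻ ω, h ω ∂μ := by
        rw [hratio]
        exact Measure.lintegral_rnDeriv_trim_mul _ (habs (n + 1))
          (hh.mono (ℱ.mono n.le_succ) le_rfl)
    _ = ∫⁻ ω, D n ω * h ω ∂ν := (Measure.lintegral_rnDeriv_trim_mul _ (habs n) hh).symm
    _ ≤ ∫⁻ _, 1 ∂ν := lintegral_mono fun ω => by
        by_cases hc : D n ω = 0
        · simp [h, hc]
        · simp [h, hc, ENNReal.mul_inv_le_one (D n ω)]
    _ = ν Set.univ := lintegral_one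

lemma integrable_sqrt_densityProcess (habs : ∀ n, μ.trim (ℱ.le n) ≪ ν.trim (ℱ.le n)) (n : ℕ) :
    Integrable (fun ω => √(ℱ.densityProcess μ ν n ω).toReal) ν :=
  integrable_sqrt_toReal ((measurable_densityProcess n).mono (ℱ.le n) le_rfl).aemeasurable
    ((Measure.lintegral_rnDeriv_trim _ (habs n)).trans_ne (measure_ne_top μ Set.univ))

lemma condExp_sqrt_densityProcess_succ (habs : ∀ n, μ.trim (ℱ.le n) ≪ ν.trim (ℱ.le n))
    (n : ℕ) :
    ν[fun ω => √(ℱ.densityProcess μ ν (n + 1) ω).toReal | ℱ n]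
      =ᵐ[ν] fun ω => √(ℱ.densityProcess μ ν n ω).toReal *
        ν[fun ω => √(ℱ.densityRatio μ ν n ω).toReal | ℱ n] ω := by
  have hprod : (fun ω => √(ℱ.densityProcess μ ν (n + 1) ω).toReal)
      =ᵐ[ν] (fun ω => √(ℱ.densityProcess μ ν n ω).toReal) *
        fun ω => √(ℱ.densityRatio μ ν n ω).toReal := by
    filter_upwards [densityProcess_succ_ae_eq_mul habs n] with ω hω
    rw [hω, Pi.mul_apply, Pi.mul_apply, ENNReal.toReal_mul, Real.sqrt_mul ENNReal.toReal_nonneg,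
      mul_comm]
  have hratio : Integrable (fun ω => √(ℱ.densityRatio μ ν n ω).toReal) ν :=
    integrable_sqrt_toReal ((measurable_densityRatio n).mono (ℱ.le _) le_rfl).aemeasurable
      ((lintegral_densityRatio_le habs n).trans_lt (measure_lt_top ν _)).ne
  exact (condExp_congr_ae hprod).trans <| condExp_mul_of_stronglyMeasurable_left
    (stronglyAdapted_sqrt_densityProcess n)
    ((integrable_sqrt_densityProcess habs (n + 1)).congr hprod) hratio

theorem mutuallySingular_of_ae_tendsto_densityProcess (hgen : (⨆ n, ℱ n) = m0)
    (habs : ∀ n, μ.trim (ℱ.le n) ≪ ν.trim (ℱ.le n))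
    (hlim : ∀ᵐ ω ∂ν, Tendsto (fun n => (ℱ.densityProcess μ ν n ω).toReal) atTop (𝓝 0)) :
    μ ⟂ₘ ν := by
  set F : Ω → ℝ := fun ω => (μ.rnDeriv ν ω).toReal
  have hF : StronglyMeasurable[⨆ n, ℱ n] F := by
    rw [hgen]; exact (Measure.measurable_rnDeriv μ ν).ennreal_toReal.stronglyMeasurable
  have hle : ∀ᵐ ω ∂ν, ∀ n, ν[F | ℱ n] ω ≤ (ℱ.densityProcess μ ν n ω).toReal :=
    ae_all_iff.mpr fun n =>
      Measure.condExp_toReal_rnDeriv_le_toReal_rnDeriv_trim (ℱ.le n) (habs n)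
  rw [← Measure.rnDeriv_eq_zero]
  filter_upwards [Measure.integrable_toReal_rnDeriv.tendsto_ae_condExp hF, hlim, hle,
    Measure.rnDeriv_lt_top μ ν] with ω hF hlim hle hlt
  have hF0 : F ω ≤ 0 := le_of_tendsto_of_tendsto' hF hlim hle
  simpa [F, ENNReal.toReal_eq_zero_iff, hlt.ne] using le_antisymm hF0 ENNReal.toReal_nonneg

end Filtration

end MeasureTheory

/-- Hino 2005, Theorem 4.1: if the conditional Hellinger-type sums
`∑ (1 - E[√αₙ | 𝓕ₙ₋₁])` diverge `ℙ`-a.s., then `ℙ̃ ⟂ ℙ`. -/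
theorem stmt_16 {Ω : Type*} {m0 : MeasurableSpace Ω}
    (ℱ : Filtration ℕ m0) (P Q : Measure Ω)
    [IsProbabilityMeasure P] [IsProbabilityMeasure Q]
    (hgen : (⨆ n, (ℱ n : MeasurableSpace Ω)) = m0)
    (habs : ∀ n, (Q.trim (ℱ.le n)).AbsolutelyContinuous (P.trim (ℱ.le n)))
    (α : ℕ → Ω → ENNReal)
    (hα : ∀ n ω, α (n + 1) ω =
      if (Q.trim (ℱ.le n)).rnDeriv (P.trim (ℱ.le n)) ω = 0 then 0
      else (Q.trim (ℱ.le (n + 1))).rnDeriv (P.trim (ℱ.le (n + 1))) ω /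
           (Q.trim (ℱ.le n)).rnDeriv (P.trim (ℱ.le n)) ω)
    (hdiv : ∀ᵐ ω ∂P, Tendsto
      (fun N => ∑ n ∈ Finset.range N,
        (1 - (P[(fun ω' => Real.sqrt ((α (n + 1) ω').toReal)) | ℱ n]) ω))
      atTop atTop) :
    Q.MutuallySingular P := by
  have hratio : ∀ n, α (n + 1) = ℱ.densityRatio Q P n := fun n => funext (hα n)
  simp only [hratio] at hdiv
  refine Filtration.mutuallySingular_of_ae_tendsto_densityProcess hgen habs ?_
  have hsqrt := ae_tendsto_zero_of_condExp_succ_le_mul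
    Filtration.stronglyAdapted_sqrt_densityProcess
    (fun _ => ae_of_all _ fun _ => Real.sqrt_nonneg _)
    (Filtration.integrable_sqrt_densityProcess habs)
    (fun _ => stronglyMeasurable_condExp)
    (fun _ => condExp_nonneg (ae_of_all _ fun _ => Real.sqrt_nonneg _))
    (fun n => (Filtration.condExp_sqrt_densityProcess_succ habs n).le) hdiv
  filter_upwards [hsqrt] with ω hω
  simpa using hω.pow 2
end
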